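/- Let S be a countable semigroup which is the disjoint union of subsemigroups S_i indexed by a finite linearly ordered set Y, such that for all i > j in Y and all s_i ∈ S_i, s_j ∈ S_j one has s_i·s_j = s_j = s_j·s_i. If each S_i is ℵ₀-categorical then S is ℵ₀-categorical. Moreover, if each S_i is a characteristic subset of S, then the converse holds: if S is ℵ₀-categorical then each S_i is ℵ₀-categorical. -/

import Mathlib

/-- Two `n`-tuples of a semigroup are automorphically equivalent if some semigroup
automorphism maps one to the other componentwise. -/
def AutRel (S : Type*) [Semigroup S] {n : ℕ} (a b : Fin n → S) : Prop :=
  ∃ φ : S ≃* S, ∀ k, φ (a k) = b k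

/-- A semigroup is ℵ₀-categorical if, for every `n ≥ 1`, the action of its automorphism
group on `n`-tuples has only finitely many orbits. -/
def Aleph0Categorical (S : Type*) [Semigroup S] : Prop :=
  ∀ n : ℕ, 1 ≤ n → ∃ t : Set (Fin n → S), t.Finite ∧
    ∀ a : Fin n → S, ∃ b ∈ t, AutRel S b a

/-- A subset of a semigroup is characteristic if it is invariant under all automorphisms. -/
def IsCharacteristic (S : Type*) [Semigroup S] (A : Set S) : Prop :=
  ∀ φ : S ≃* S, φ '' A = A

/-!
ℵ₀-categoricity says exactly that, for each `n`, every `n`-tuple can be moved by an automorphism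
into one fixed finite set of elements. Automorphisms of the pieces `S_i` glue to an automorphism
of `S`: a product across two pieces equals its factor in the lower piece, which every glued map
keeps in that piece. So finite sets for the finitely many pieces give one for `S`. Conversely an
automorphism of `S` restricts to one of a characteristic piece `S_i`, and the elements of `S_i`
in a finite set for `S` form one for `S_i`.
-/

open Set

theorem aleph0Categorical_iff_exists_finite_image {T : Type*} [Semigroup T] :
    Aleph0Categorical T ↔
      ∀ n : ℕ, 1 ≤ n → ∃ V : Set T, V.Finite ∧ ∀ a : Fin n → T, ∃ φ : T ≃* T, ∀ k, a k ∈ φ '' V := by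
  refine forall₂_congr fun n _ => ⟨?_, ?_⟩
  · rintro ⟨t, ht, hrep⟩
    refine ⟨⋃ b ∈ t, range b, ht.biUnion fun b _ => finite_range b, fun a => ?_⟩
    obtain ⟨b, hb, φ, hφ⟩ := hrep a
    exact ⟨φ, fun k => ⟨b k, mem_biUnion hb ⟨k, rfl⟩, hφ k⟩⟩
  · rintro ⟨V, hV, hrep⟩
    refine ⟨univ.pi fun _ => V, Finite.pi fun _ => hV, fun a => ?_⟩
    obtain ⟨φ, hφ⟩ := hrep a
    choose b hbV hba using hφ
    exact ⟨b, fun k _ => hbV k, φ, hba⟩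

theorem Subsemigroup.exists_mulEquiv_forall_mem_image {S : Type*} [Semigroup S]
    (B : Subsemigroup S) {n : ℕ} {V : Set B}
    (hV : ∀ b : Fin n → B, ∃ ψ : B ≃* B, ∀ k, b k ∈ ψ '' V) (a : Fin n → S) :
    ∃ ψ : B ≃* B, ∀ k (h : a k ∈ B), ⟨a k, h⟩ ∈ ψ '' V := by
  classical
  by_cases hB : ∃ k, a k ∈ B
  · obtain ⟨k₀, hk₀⟩ := hB
    obtain ⟨ψ, hψ⟩ := hV fun k => if h : a k ∈ B then ⟨a k, h⟩ else ⟨a k₀, hk₀⟩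
    exact ⟨ψ, fun k h => by simpa [h] using hψ k⟩
  · exact ⟨MulEquiv.refl B, fun k h => absurd ⟨k, h⟩ hB⟩

def MulEquiv.restrictOfImageEq {S : Type*} [Semigroup S] (φ : S ≃* S) (B : Subsemigroup S)
    (h : φ '' B = B) : B ≃* B :=
  (φ.subsemigroupMap B).trans (MulEquiv.subsemigroupCongr (SetLike.coe_injective (by simpa)))

theorem IsCharacteristic.aleph0Categorical {S : Type*} [Semigroup S] {B : Subsemigroup S}
    (hB : IsCharacteristic S B) (hS : Aleph0Categorical S) : Aleph0Categorical B := by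
  rw [aleph0Categorical_iff_exists_finite_image] at hS ⊢
  intro n hn
  obtain ⟨V, hV, hrep⟩ := hS n hn
  refine ⟨Subtype.val ⁻¹' V, hV.preimage Subtype.val_injective.injOn, fun a => ?_⟩
  obtain ⟨φ, hφ⟩ := hrep fun k => a k
  refine ⟨φ.restrictOfImageEq B (hB φ), fun k => ?_⟩
  obtain ⟨x, hxV, hxa⟩ := hφ k
  have hxB : x ∈ B := by
    have : (a k : S) ∈ φ '' B := by rw [hB φ]; exact (a k).2
    obtain ⟨y, hyB, hya⟩ := this
    exact φ.injective (hxa.trans hya.symm) ▸ hyB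
  exact ⟨⟨x, hxB⟩, hxV, Subtype.ext hxa⟩

structure IsOrdinalSum {S : Type*} [Semigroup S] {Y : Type*} [LinearOrder Y]
    (A : Y → Subsemigroup S) : Prop where
  disjoint : ∀ i j : Y, i ≠ j → (A i : Set S) ∩ (A j : Set S) = ∅
  iUnion_eq_univ : (⋃ i : Y, (A i : Set S)) = univ
  mul_eq_of_lt : ∀ i j : Y, j < i → ∀ s ∈ A i, ∀ t ∈ A j, s * t = t ∧ t * s = t

namespace IsOrdinalSum

variable {S : Type*} [Semigroup S] {Y : Type*} [LinearOrder Y] {A : Y → Subsemigroup S}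
  (hA : IsOrdinalSum A)

noncomputable def index (s : S) : Y :=
  (iUnion_eq_univ_iff.1 hA.iUnion_eq_univ s).choose

theorem mem_index (s : S) : s ∈ A (hA.index s) :=
  (iUnion_eq_univ_iff.1 hA.iUnion_eq_univ s).choose_spec

theorem index_eq_of_mem {s : S} {i : Y} (hs : s ∈ A i) : hA.index s = i := by
  by_contra h
  have hmem : s ∈ (A (hA.index s) : Set S) ∩ A i := ⟨hA.mem_index s, hs⟩
  rwa [hA.disjoint _ _ h] at hmem

noncomputable def glue (ψ : ∀ i, A i ≃* A i) (s : S) : S :=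
  ψ (hA.index s) ⟨s, hA.mem_index s⟩

theorem glue_of_mem (ψ : ∀ i, A i ≃* A i) {s : S} {i : Y} (hs : s ∈ A i) :
    hA.glue ψ s = ψ i ⟨s, hs⟩ := by
  obtain rfl := hA.index_eq_of_mem hs
  rfl

theorem glue_mem (ψ : ∀ i, A i ≃* A i) {s : S} {i : Y} (hs : s ∈ A i) : hA.glue ψ s ∈ A i :=
  hA.glue_of_mem ψ hs ▸ (ψ i ⟨s, hs⟩).2

theorem glue_symm_glue (ψ : ∀ i, A i ≃* A i) (s : S) :
    hA.glue (fun i => (ψ i).symm) (hA.glue ψ s) = s := by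
  have hs := hA.mem_index s
  rw [hA.glue_of_mem _ (hA.glue_mem ψ hs)]
  simp [hA.glue_of_mem ψ hs]

theorem glue_mul (ψ : ∀ i, A i ≃* A i) (s t : S) :
    hA.glue ψ (s * t) = hA.glue ψ s * hA.glue ψ t := by
  obtain ⟨i, hs⟩ : ∃ i, s ∈ A i := ⟨_, hA.mem_index s⟩
  obtain ⟨j, ht⟩ : ∃ j, t ∈ A j := ⟨_, hA.mem_index t⟩
  rcases lt_trichotomy i j with hij | rfl | hji
  · rw [(hA.mul_eq_of_lt j i hij t ht s hs).2,
      (hA.mul_eq_of_lt j i hij _ (hA.glue_mem ψ ht) _ (hA.glue_mem ψ hs)).2]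
  · rw [hA.glue_of_mem ψ (mul_mem hs ht), hA.glue_of_mem ψ hs, hA.glue_of_mem ψ ht,
      ← MulMemClass.coe_mul, ← map_mul]
    rfl
  · rw [(hA.mul_eq_of_lt i j hji s hs t ht).1,
      (hA.mul_eq_of_lt i j hji _ (hA.glue_mem ψ hs) _ (hA.glue_mem ψ ht)).1]

noncomputable def glueMulEquiv (ψ : ∀ i, A i ≃* A i) : S ≃* S where
  toFun := hA.glue ψ
  invFun := hA.glue fun i => (ψ i).symm
  left_inv := hA.glue_symm_glue ψ
  right_inv := hA.glue_symm_glue fun i => (ψ i).symm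
  map_mul' := hA.glue_mul ψ

theorem glueMulEquiv_apply_coe (ψ : ∀ i, A i ≃* A i) {i : Y} (x : A i) :
    hA.glueMulEquiv ψ x = ψ i x :=
  hA.glue_of_mem ψ x.2

end IsOrdinalSum

theorem IsOrdinalSum.aleph0Categorical {S : Type*} [Semigroup S] {Y : Type*} [LinearOrder Y]
    [Finite Y] {A : Y → Subsemigroup S} (hA : IsOrdinalSum A)
    (h : ∀ i, Aleph0Categorical (A i)) : Aleph0Categorical S := by
  simp only [aleph0Categorical_iff_exists_finite_image] at h ⊢
  intro n hn
  choose V hV hrep using fun i => h i n hn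
  refine ⟨⋃ i, Subtype.val '' V i, finite_iUnion fun i => (hV i).image _, fun a => ?_⟩
  choose ψ hψ using fun i => (A i).exists_mulEquiv_forall_mem_image (hrep i) a
  refine ⟨hA.glueMulEquiv ψ, fun k => ?_⟩
  obtain ⟨x, hxV, hxa⟩ := hψ (hA.index (a k)) k (hA.mem_index _)
  exact ⟨x, mem_iUnion.2 ⟨_, x, hxV, rfl⟩, by rw [hA.glueMulEquiv_apply_coe, hxa]⟩

theorem aleph0Categorical_finite_chain (S : Type*) [Semigroup S]
    (Y : Type*) [LinearOrder Y] [Fintype Y] (A : Y → Subsemigroup S)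
    (hdisj : ∀ i j : Y, i ≠ j → (A i : Set S) ∩ (A j : Set S) = ∅)
    (hcover : (⋃ i : Y, (A i : Set S)) = Set.univ)
    (habs : ∀ i j : Y, j < i → ∀ s ∈ A i, ∀ t ∈ A j, s * t = t ∧ t * s = t) :
    ((∀ i : Y, Aleph0Categorical (A i)) → Aleph0Categorical S) ∧
    ((∀ i : Y, IsCharacteristic S (A i : Set S)) →
      Aleph0Categorical S → ∀ i : Y, Aleph0Categorical (A i)) :=
  ⟨IsOrdinalSum.aleph0Categorical ⟨hdisj, hcover, habs⟩,
    fun hchar hS i => (hchar i).aleph0Categorical hS⟩
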